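/- Let A = W_L D_{L-1} W_{L-1} ⋯ D_1 W_1 where each D_ℓ is a diagonal matrix with entries in {a, 1} for some a ∈ (−1, 1], and suppose rank A = k. Then |A|_+ ≤ Π_{ℓ=1}^L |W_ℓ|_k, where |A|_+ is the product of the k nonzero singular values of A and |W|_k is the product of the k largest singular values of W. -/

import Mathlib

/-!
The `k`-th compound matrix `C_k A` (the matrix of `k × k` minors) is multiplicative, by
Cauchy–Binet, and its ℓ² operator norm is `|A|_k`: indeed `‖C_k A‖² = ‖C_k (Aᴴ A)‖`, and
`C_k (Aᴴ A)` is unitarily similar to the diagonal matrix of `k`-fold products of eigenvalues of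
`Aᴴ A`, whose largest entry is the product of the `k` largest squared singular values.
If `rank A = k`, exactly the first `k` singular values are nonzero, so `|A|₊ = |A|_k`. Hence
`|A|₊ = ‖C_k A‖ ≤ ∏ ‖C_k W_ℓ‖ ∏ ‖C_k D_ℓ‖`, and `‖C_k D_ℓ‖ ≤ 1` because every product of `k`
diagonal entries of `D_ℓ` has absolute value at most `1`.
-/

open Matrix Finset

/-- The singular values of a real matrix, listed in decreasing order (square roots of the
eigenvalues of `Aᵀ A`, sorted). -/
noncomputable def singularValues {m n : ℕ} (A : Matrix (Fin m) (Fin n) ℝ) : Fin n → ℝ :=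
  fun i => Real.sqrt (((Matrix.isHermitian_conjTranspose_mul_self A).eigenvalues ∘
    Tuple.sort ((Matrix.isHermitian_conjTranspose_mul_self A).eigenvalues)) i.rev)

/-- The `i`-th largest singular value (0-indexed), zero-padded beyond the matrix dimensions. -/
noncomputable def sval {m n : ℕ} (A : Matrix (Fin m) (Fin n) ℝ) (i : ℕ) : ℝ :=
  if h : i < n then singularValues A ⟨i, h⟩ else 0


/-- The `k`-determinant: the product of the `k` largest singular values. -/
noncomputable def kDet {m n : ℕ} (A : Matrix (Fin m) (Fin n) ℝ) (k : ℕ) : ℝ :=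
  ∏ i ∈ Finset.range k, sval A i


/-- The pseudo-determinant: the product of the nonzero singular values. -/
noncomputable def pseudoDet {m n : ℕ} (A : Matrix (Fin m) (Fin n) ℝ) : ℝ :=
  ∏ i ∈ Finset.univ.filter (fun i => singularValues A i ≠ 0), singularValues A i


/-- The product `W_{ℓ} D_{ℓ-1} ⋯ D_1 W_1` of layers `1,…,ℓ`. -/
def netProd {n : ℕ} (W D : ℕ → Matrix (Fin n) (Fin n) ℝ) : ℕ → Matrix (Fin n) (Fin n) ℝ
  | 0 => 1
  | ℓ + 1 => W (ℓ + 1) * D ℓ * netProd W D ℓ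

open Set.powersetCard

namespace Matrix

variable {R : Type*} [CommRing R]

def compound {m n : Type*} [LinearOrder m] [LinearOrder n] (k : ℕ) (A : Matrix m n R) :
    Matrix (Set.powersetCard m k) (Set.powersetCard n k) R :=
  of fun s t => (A.submatrix (ofFinEmbEquiv.symm s) (ofFinEmbEquiv.symm t)).det

theorem compound_eq_toMatrix_exteriorPower_map [Nontrivial R] {m n : Type*}
    [Fintype m] [LinearOrder m] [Fintype n] [LinearOrder n] (k : ℕ) (A : Matrix m n R) :
    compound k A = LinearMap.toMatrix ((Pi.basisFun R n).exteriorPower k)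
      ((Pi.basisFun R m).exteriorPower k) (exteriorPower.map k (toLin' A)) := by
  ext s t
  rw [LinearMap.toMatrix_apply, exteriorPower.basis_apply, exteriorPower.map_apply_ιMulti_family,
    exteriorPower.basis_repr_apply]
  simp only [exteriorPower.ιMulti_family, Function.comp_apply,
    exteriorPower.ιMultiDual_apply_ιMulti]
  rw [compound, of_apply, ← det_transpose]
  congr 1
  ext i j
  simp [Pi.basisFun_apply, toLin'_apply, mulVec_single]

/-- The Cauchy–Binet formula, obtained from the functoriality of `exteriorPower.map`. -/
theorem compound_mul [Nontrivial R] {l m n : Type*} [Fintype l] [LinearOrder l]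
    [Fintype m] [LinearOrder m] [Fintype n] [LinearOrder n]
    (k : ℕ) (A : Matrix l m R) (B : Matrix m n R) :
    compound k (A * B) = compound k A * compound k B := by
  simp only [compound_eq_toMatrix_exteriorPower_map, toLin'_mul, exteriorPower.map_comp,
    LinearMap.toMatrix_comp _ ((Pi.basisFun R m).exteriorPower k)]

theorem compound_conjTranspose [StarRing R] {m n : Type*} [LinearOrder m] [LinearOrder n]
    (k : ℕ) (A : Matrix m n R) : compound k Aᴴ = (compound k A)ᴴ := by
  ext s t
  simp only [compound, of_apply, conjTranspose_apply, ← det_conjTranspose,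
    conjTranspose_submatrix]

theorem compound_diagonal {n : Type*} [LinearOrder n] (k : ℕ) (d : n → R) :
    compound k (diagonal d) =
      diagonal fun s : Set.powersetCard n k => ∏ i ∈ (s : Finset n), d i := by
  ext s t
  by_cases hst : s = t
  · subst hst
    rw [diagonal_apply_eq, compound, of_apply,
      submatrix_diagonal d _ (ofFinEmbEquiv.symm s).injective, det_diagonal,
      ofFinEmbEquiv_symm_apply]
    conv_rhs => rw [← Finset.map_orderEmbOfFin_univ s.val s.prop, Finset.prod_map]
    rfl
  · rw [diagonal_apply_ne _ hst]
    obtain ⟨i, his, hit⟩ := (exists_mem_notMem_iff_ne s t).mp hst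
    obtain ⟨j, rfl⟩ := (mem_range_ofFinEmbEquiv_symm_iff_mem s i).mpr his
    refine det_eq_zero_of_row_eq_zero j fun j' => diagonal_apply_ne _ fun h => hit ?_
    rw [h]
    exact (mem_range_ofFinEmbEquiv_symm_iff_mem t _).mp ⟨j', rfl⟩

theorem compound_one {n : Type*} [LinearOrder n] (k : ℕ) :
    compound k (1 : Matrix n n R) = 1 := by
  rw [← diagonal_one, compound_diagonal]
  simp

theorem compound_mem_unitary [StarRing R] [Nontrivial R] {n : Type*} [Fintype n] [LinearOrder n]
    (k : ℕ) {U : Matrix n n R} (hU : U ∈ unitary (Matrix n n R)) :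
    compound k U ∈ unitary (Matrix _ _ R) := by
  rw [Unitary.mem_iff, star_eq_conjTranspose] at hU ⊢
  rw [← compound_conjTranspose, ← compound_mul, ← compound_mul, hU.1, hU.2, compound_one]
  exact ⟨rfl, rfl⟩

end Matrix

open scoped Matrix.Norms.L2Operator

theorem Matrix.IsHermitian.norm_compound {n : Type*} [Fintype n] [LinearOrder n] {M : Matrix n n ℝ}
    (hM : M.IsHermitian) (k : ℕ) :
    ‖compound k M‖ = ‖fun s : Set.powersetCard n k => ∏ i ∈ (s : Finset n), hM.eigenvalues i‖ := by
  have hCU := compound_mem_unitary k hM.eigenvectorUnitary.2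
  have hC : compound k M =
      compound k hM.eigenvectorUnitary *
        diagonal (fun s : Set.powersetCard n k => ∏ i ∈ (s : Finset n), hM.eigenvalues i) *
        star (compound k hM.eigenvectorUnitary) := by
    conv_lhs => rw [hM.spectral_theorem]
    simp only [Unitary.conjStarAlgAut_apply, compound_mul, star_eq_conjTranspose,
      compound_conjTranspose, compound_diagonal, RCLike.ofReal_real_eq_id, Function.id_comp]
  rw [hC, CStarRing.norm_mul_mem_unitary _ (Unitary.star_mem hCU),
    CStarRing.norm_mem_unitary_mul _ hCU, l2_opNorm_diagonal]

theorem Fin.val_le_val_of_strictMono {k n : ℕ} {e : Fin k → Fin n} (he : StrictMono e)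
    (j : Fin k) : (j : ℕ) ≤ e j := by
  -- `e` maps the `j + 1` elements of `Iic j` injectively into `Iic (e j)`.
  have h := Finset.card_le_card (Finset.image_subset_iff.mpr fun i (hi : i ∈ Iic j) =>
    Finset.mem_Iic.mpr (he.monotone (Finset.mem_Iic.mp hi)))
  rwa [Finset.card_image_of_injective _ he.injective, Fin.card_Iic, Fin.card_Iic,
    Nat.add_le_add_iff_right] at h

theorem Antitone.prod_le_prod_castLE {n k : ℕ} {g : Fin n → ℝ} (hg : Antitone g) (hg0 : 0 ≤ g)
    {s : Finset (Fin n)} (hs : #s = k) (hkn : k ≤ n) :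
    ∏ i ∈ s, g i ≤ ∏ j : Fin k, g (Fin.castLE hkn j) := by
  rw [← Finset.map_orderEmbOfFin_univ s hs, Finset.prod_map]
  refine Finset.prod_le_prod (fun j _ => hg0 _) fun j _ => hg ?_
  exact Fin.val_le_val_of_strictMono (s.orderEmbOfFin hs).strictMono j

theorem Antitone.ne_zero_iff_lt_card {n : ℕ} {g : Fin n → ℝ} (hg : Antitone g) (hg0 : 0 ≤ g)
    (i : Fin n) : g i ≠ 0 ↔ (i : ℕ) < #({j | g j ≠ 0} : Finset (Fin n)) := by
  have hpos : ∀ j, j ∈ ({j | g j ≠ 0} : Finset (Fin n)) ↔ 0 < g j := fun j => by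
    simpa only [Finset.mem_filter, Finset.mem_univ, true_and] using
      ⟨(hg0 j).lt_of_ne', LT.lt.ne'⟩
  constructor
  · intro hi
    have h : Finset.Iic i ⊆ ({j | g j ≠ 0} : Finset (Fin n)) := fun j hj =>
      (hpos j).mpr (((hg0 i).lt_of_ne' hi).trans_le (hg (Finset.mem_Iic.mp hj)))
    have hcard := Finset.card_le_card h
    rw [Fin.card_Iic] at hcard
    omega
  · intro hi h0
    have h : ({j | g j ≠ 0} : Finset (Fin n)) ⊆ Iio i := fun j hj =>
      Finset.mem_Iio.mpr (lt_of_not_ge fun hij => ((hpos j).mp hj).not_ge (h0 ▸ hg hij))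
    have hcard := hi.trans_le (Finset.card_le_card h)
    rw [Fin.card_Iio] at hcard
    exact hcard.false

theorem Antitone.norm_prod_powersetCard_comp_perm {n k : ℕ} {g : Fin n → ℝ} (hg : Antitone g)
    (hg0 : 0 ≤ g) (τ : Equiv.Perm (Fin n)) (hkn : k ≤ n) :
    ‖fun s : Set.powersetCard (Fin n) k => ∏ i ∈ (s : Finset (Fin n)), g (τ i)‖ =
      ∏ j : Fin k, g (Fin.castLE hkn j) := by
  have hmap (s : Finset (Fin n)) : ∏ i ∈ s, g (τ i) = ∏ i ∈ s.map τ.toEmbedding, g i :=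
    (prod_map s τ.toEmbedding g).symm
  apply le_antisymm
  · refine (pi_norm_le_iff_of_nonneg (prod_nonneg fun j _ => hg0 _)).mpr fun s => ?_
    rw [Real.norm_of_nonneg (prod_nonneg fun i _ => hg0 _), hmap]
    exact hg.prod_le_prod_castLE hg0 (by rw [card_map, s.prop]) hkn
  · let t : Set.powersetCard (Fin n) k :=
      ⟨(univ.map (Fin.castLEEmb hkn)).map τ.symm.toEmbedding, by simp⟩
    calc ∏ j : Fin k, g (Fin.castLE hkn j) = ∏ i ∈ (t : Finset (Fin n)), g (τ i) := by
          rw [hmap, Finset.map_map]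
          simp
      _ ≤ _ := (Real.le_norm_self _).trans (norm_le_pi_norm
        (fun s : Set.powersetCard (Fin n) k => ∏ i ∈ (s : Finset (Fin n)), g (τ i)) t)

theorem singularValues_nonneg {m n : ℕ} (A : Matrix (Fin m) (Fin n) ℝ) : 0 ≤ singularValues A :=
  fun _ => Real.sqrt_nonneg _

theorem singularValues_antitone {m n : ℕ} (A : Matrix (Fin m) (Fin n) ℝ) :
    Antitone (singularValues A) :=
  fun _ _ hij => Real.sqrt_le_sqrt (Tuple.monotone_sort _ (Fin.rev_le_rev.mpr hij))

theorem exists_perm_eigenvalues_eq_sq_singularValues {m n : ℕ} (A : Matrix (Fin m) (Fin n) ℝ) :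
    ∃ τ : Equiv.Perm (Fin n), ∀ i,
      (isHermitian_conjTranspose_mul_self A).eigenvalues i = singularValues A (τ i) ^ 2 := by
  refine ⟨(Tuple.sort (isHermitian_conjTranspose_mul_self A).eigenvalues).symm.trans Fin.revPerm,
    fun i => ?_⟩
  simp only [singularValues, Function.comp_apply, Equiv.trans_apply, Fin.revPerm_apply,
    Fin.rev_rev, Equiv.apply_symm_apply]
  exact (Real.sq_sqrt (eigenvalues_conjTranspose_mul_self_nonneg A i)).symm

theorem kDet_eq_prod_castLE {m n k : ℕ} (A : Matrix (Fin m) (Fin n) ℝ) (hkn : k ≤ n) :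
    kDet A k = ∏ j : Fin k, singularValues A (Fin.castLE hkn j) := by
  rw [kDet, ← Fin.prod_univ_eq_prod_range]
  exact prod_congr rfl fun j _ => dif_pos (j.2.trans_le hkn)

theorem card_singularValues_ne_zero_eq_rank {m n : ℕ} (A : Matrix (Fin m) (Fin n) ℝ) :
    #({i | singularValues A i ≠ 0} : Finset (Fin n)) = A.rank := by
  obtain ⟨τ, hτ⟩ := exists_perm_eigenvalues_eq_sq_singularValues A
  rw [← rank_conjTranspose_mul_self,
    (isHermitian_conjTranspose_mul_self A).rank_eq_card_non_zero_eigs, ← Fintype.card_subtype]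
  exact Fintype.card_congr (τ.subtypeEquiv fun i => by rw [hτ, pow_ne_zero_iff two_ne_zero]).symm

theorem pseudoDet_eq_kDet {m n k : ℕ} (A : Matrix (Fin m) (Fin n) ℝ) (hrank : A.rank = k) :
    pseudoDet A = kDet A k := by
  have hkn : k ≤ n := hrank ▸ rank_le_width A
  have hsupp : ({i | singularValues A i ≠ 0} : Finset (Fin n)) =
      univ.map (Fin.castLEEmb hkn) := by
    ext i
    rw [mem_filter_univ, (singularValues_antitone A).ne_zero_iff_lt_card (singularValues_nonneg A),
      card_singularValues_ne_zero_eq_rank, hrank]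
    simp only [mem_map, mem_univ, true_and, Fin.castLEEmb_apply]
    exact ⟨fun h => ⟨⟨i, h⟩, rfl⟩, by rintro ⟨j, rfl⟩; exact j.2⟩
  rw [pseudoDet, hsupp, prod_map, kDet_eq_prod_castLE A hkn]
  rfl

theorem norm_compound_eq_kDet {m n k : ℕ} (A : Matrix (Fin m) (Fin n) ℝ) (hkn : k ≤ n) :
    ‖compound k A‖ = kDet A k := by
  obtain ⟨τ, hτ⟩ := exists_perm_eigenvalues_eq_sq_singularValues A
  have hsq : ‖compound k A‖ ^ 2 = kDet A k ^ 2 := by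
    calc ‖compound k A‖ ^ 2 = ‖compound k (Aᴴ * A)‖ := by
          rw [compound_mul, compound_conjTranspose, l2_opNorm_conjTranspose_mul_self, sq]
      _ = ‖fun s : Set.powersetCard (Fin n) k =>
            ∏ i ∈ (s : Finset (Fin n)), singularValues A (τ i) ^ 2‖ := by
          rw [(isHermitian_conjTranspose_mul_self A).norm_compound]
          simp_rw [hτ]
      _ = ∏ j : Fin k, singularValues A (Fin.castLE hkn j) ^ 2 :=
          Antitone.norm_prod_powersetCard_comp_perm
            (fun i j hij => pow_le_pow_left₀ (singularValues_nonneg A j)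
              (singularValues_antitone A hij) 2)
            (fun i => sq_nonneg _) τ hkn
      _ = kDet A k ^ 2 := by rw [kDet_eq_prod_castLE A hkn, prod_pow]
  rw [kDet_eq_prod_castLE A hkn] at hsq ⊢
  exact (sq_eq_sq₀ (norm_nonneg _) (prod_nonneg fun j _ => singularValues_nonneg A _)).mp hsq

theorem norm_compound_diagonal_le_one {n : Type*} [Fintype n] [LinearOrder n] (k : ℕ)
    {d : n → ℝ} (hd : ∀ i, |d i| ≤ 1) : ‖compound k (diagonal d)‖ ≤ 1 := by
  rw [compound_diagonal, l2_opNorm_diagonal]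
  refine (pi_norm_le_iff_of_nonneg zero_le_one).mpr fun s => ?_
  rw [Real.norm_eq_abs, abs_prod]
  exact prod_le_one (fun i _ => abs_nonneg _) fun i _ => hd i

theorem norm_compound_netProd_le {n : ℕ} (k L : ℕ) (W D : ℕ → Matrix (Fin n) (Fin n) ℝ)
    (hD : ∀ ℓ < L, ‖compound k (D ℓ)‖ ≤ 1) :
    ‖compound k (netProd W D L)‖ ≤ ∏ ℓ ∈ Icc 1 L, ‖compound k (W ℓ)‖ := by
  induction L with
  | zero =>
    rw [netProd, ← diagonal_one, Icc_eq_empty (by omega), prod_empty]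
    exact norm_compound_diagonal_le_one k fun _ => by simp
  | succ L ih =>
    rw [netProd, compound_mul, compound_mul, prod_Icc_succ_top (by omega), mul_comm]
    calc ‖compound k (W (L + 1)) * compound k (D L) * compound k (netProd W D L)‖
        ≤ ‖compound k (W (L + 1))‖ * ‖compound k (D L)‖ * ‖compound k (netProd W D L)‖ :=
          (l2_opNorm_mul _ _).trans
            (mul_le_mul_of_nonneg_right (l2_opNorm_mul _ _) (norm_nonneg _))
      _ ≤ ‖compound k (W (L + 1))‖ * 1 * ∏ ℓ ∈ Icc 1 L, ‖compound k (W ℓ)‖ := by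
          gcongr
          exacts [hD L L.lt_succ_self, ih fun ℓ hℓ => hD ℓ (hℓ.trans L.lt_succ_self)]
      _ = _ := by rw [mul_one]

/-- If `A = W_L D_{L-1} ⋯ D_1 W_1` where each `D_ℓ` is diagonal with entries in `{a, 1}`,
`a ∈ (−1, 1]`, and `rank A = k`, then `|A|₊ ≤ ∏_ℓ |W_ℓ|_k`. -/
theorem stmt9 {n : ℕ} (L k : ℕ) (a : ℝ) (ha : -1 < a) (ha' : a ≤ 1)
    (W D : ℕ → Matrix (Fin n) (Fin n) ℝ) (hD0 : D 0 = 1)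
    (hD : ∀ ℓ, 0 < ℓ → ℓ < L → ∃ dvec : Fin n → ℝ,
      D ℓ = Matrix.diagonal dvec ∧ ∀ i, dvec i = a ∨ dvec i = 1)
    (hrank : (netProd W D L).rank = k) :
    pseudoDet (netProd W D L) ≤ ∏ ℓ ∈ Finset.Icc 1 L, kDet (W ℓ) k := by
  have hkn : k ≤ n := hrank ▸ rank_le_width _
  have hD_le : ∀ ℓ < L, ‖compound k (D ℓ)‖ ≤ 1 := by
    intro ℓ hℓ
    obtain ⟨d, hDd, hd⟩ : ∃ d : Fin n → ℝ, D ℓ = diagonal d ∧ ∀ i, |d i| ≤ 1 := by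
      rcases Nat.eq_zero_or_pos ℓ with rfl | hpos
      · exact ⟨1, hD0.trans diagonal_one.symm, fun _ => by simp⟩
      · obtain ⟨d, hDd, hd⟩ := hD ℓ hpos hℓ
        refine ⟨d, hDd, fun i => ?_⟩
        rcases hd i with h | h <;> rw [h]
        exacts [abs_le.mpr ⟨ha.le, ha'⟩, by simp]
    exact hDd ▸ norm_compound_diagonal_le_one k hd
  calc pseudoDet (netProd W D L) = ‖compound k (netProd W D L)‖ := by
        rw [pseudoDet_eq_kDet _ hrank, norm_compound_eq_kDet _ hkn]
    _ ≤ ∏ ℓ ∈ Icc 1 L, ‖compound k (W ℓ)‖ := norm_compound_netProd_le k L W D hD_le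
    _ = ∏ ℓ ∈ Icc 1 L, kDet (W ℓ) k := by simp_rw [norm_compound_eq_kDet _ hkn]
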